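/- If V is a finite-dimensional Bol algebra with weak radical RV and there exists a semisimple subalgebra SMV with V = SMV + RV as vector spaces, then SMV ∩ RV = {0}, so V = SMV ⊕ RV and SMV ≅ V/RV as Bol algebras. -/
import Mathlib


variable {F : Type*} [Field F] [CharZero F] {V : Type*} [AddCommGroup V] [Module F V]

/-- A Bol algebra structure: bilinear product `mul`, trilinear product `tri`. -/
def IsBolAlgebra (mul : V →ₗ[F] V →ₗ[F] V) (tri : V →ₗ[F] V →ₗ[F] V →ₗ[F] V) : Prop :=
  (∀ x : V, mul x x = 0) ∧
  (∀ x y z : V, tri x y z + tri y z x + tri z x y = 0) ∧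
  (∀ x y z w : V,
    mul (tri x y z) w - mul (tri x y w) z + tri z w (mul x y)
      - tri x y (mul z w) + mul (mul x y) (mul z w) = 0) ∧
  (∀ x y z w u : V,
    tri x y (tri z w u)
      = tri (tri x y z) w u + tri z (tri x y w) u + tri z w (tri x y u))

/-- Span of all trilinear products `(a,b,c)` with `a ∈ A`, `b ∈ B`, `c ∈ C`. -/
def triProd (tri : V →ₗ[F] V →ₗ[F] V →ₗ[F] V) (A B C : Submodule F V) : Submodule F V :=
  Submodule.span F {x : V | ∃ a ∈ A, ∃ b ∈ B, ∃ c ∈ C, tri a b c = x}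

/-- The chain `I⁽⁰⁾ = I`, `I⁽ᵏ⁺¹⁾ = (V, I⁽ᵏ⁾, I⁽ᵏ⁾)`. -/
def bolChain (tri : V →ₗ[F] V →ₗ[F] V →ₗ[F] V) (I : Submodule F V) : ℕ → Submodule F V
  | 0 => I
  | k + 1 => triProd tri ⊤ (bolChain tri I k) (bolChain tri I k)

/-- An ideal of a Bol algebra. -/
def IsBolIdeal (mul : V →ₗ[F] V →ₗ[F] V) (tri : V →ₗ[F] V →ₗ[F] V →ₗ[F] V)
    (I : Submodule F V) : Prop :=
  ∀ v w : V, ∀ i ∈ I,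
    mul v i ∈ I ∧ mul i v ∈ I ∧ tri i v w ∈ I ∧ tri v i w ∈ I ∧ tri v w i ∈ I

/-- Weak solvability of an ideal. -/
def IsWeaklySolvable (tri : V →ₗ[F] V →ₗ[F] V →ₗ[F] V) (I : Submodule F V) : Prop :=
  ∃ k : ℕ, bolChain tri I k = ⊥

/-- The weak radical: a maximal weakly solvable ideal. -/
def IsWeakRadical (mul : V →ₗ[F] V →ₗ[F] V) (tri : V →ₗ[F] V →ₗ[F] V →ₗ[F] V)
    (R : Submodule F V) : Prop :=
  IsBolIdeal mul tri R ∧ IsWeaklySolvable tri R ∧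
    ∀ J : Submodule F V, IsBolIdeal mul tri J → IsWeaklySolvable tri J → J ≤ R

/-- A Bol subalgebra. -/
def IsBolSubalgebra (mul : V →ₗ[F] V →ₗ[F] V) (tri : V →ₗ[F] V →ₗ[F] V →ₗ[F] V)
    (S : Submodule F V) : Prop :=
  ∀ a ∈ S, ∀ b ∈ S, ∀ c ∈ S, mul a b ∈ S ∧ tri a b c ∈ S

/-- The chain relative to a subalgebra `S`: `J⁽⁰⁾ = J`, `J⁽ᵏ⁺¹⁾ = (S, J⁽ᵏ⁾, J⁽ᵏ⁾)`. -/
def bolChainIn (tri : V →ₗ[F] V →ₗ[F] V →ₗ[F] V) (S J : Submodule F V) : ℕ → Submodule F V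
  | 0 => J
  | k + 1 => triProd tri S (bolChainIn tri S J k) (bolChainIn tri S J k)

/-- A subalgebra `S` is semisimple if every weakly solvable ideal of `S` is zero. -/
def IsSemisimpleSubalgebra (mul : V →ₗ[F] V →ₗ[F] V) (tri : V →ₗ[F] V →ₗ[F] V →ₗ[F] V)
    (S : Submodule F V) : Prop :=
  ∀ J : Submodule F V, J ≤ S →
    (∀ s ∈ S, ∀ t ∈ S, ∀ j ∈ J,
      mul s j ∈ J ∧ mul j s ∈ J ∧ tri j s t ∈ J ∧ tri s j t ∈ J ∧ tri s t j ∈ J) →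
    (∃ k : ℕ, bolChainIn tri S J k = ⊥) → J = ⊥

theorem triProd_mono (tri : V →ₗ[F] V →ₗ[F] V →ₗ[F] V) {A A' B B' C C' : Submodule F V}
    (hA : A ≤ A') (hB : B ≤ B') (hC : C ≤ C') :
    triProd tri A B C ≤ triProd tri A' B' C' := by
  apply Submodule.span_mono
  rintro x ⟨a, ha, b, hb, c, hc, rfl⟩
  exact ⟨a, hA ha, b, hB hb, c, hC hc, rfl⟩

theorem bolChainIn_le_bolChain (tri : V →ₗ[F] V →ₗ[F] V →ₗ[F] V) {S J I : Submodule F V}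
    (hJ : J ≤ I) : ∀ k, bolChainIn tri S J k ≤ bolChain tri I k := by
  intro k
  induction k with
  | zero => exact hJ
  | succ k ih => exact triProd_mono tri le_top ih ih

/-- if `V = SMV + RV` with `SMV` a semisimple subalgebra, then
`SMV ⊓ RV = 0`, so `V = SMV ⊕ RV` and the quotient map restricts to `SMV ≅ V/RV`. -/
theorem bol_levi_of_semisimple_complement [FiniteDimensional F V]
    (mul : V →ₗ[F] V →ₗ[F] V) (tri : V →ₗ[F] V →ₗ[F] V →ₗ[F] V)
    (hBol : IsBolAlgebra mul tri) (RV SMV : Submodule F V)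
    (hRV : IsWeakRadical mul tri RV) (hSMV : IsBolSubalgebra mul tri SMV)
    (hss : IsSemisimpleSubalgebra mul tri SMV) (hsum : SMV ⊔ RV = ⊤) :
    SMV ⊓ RV = ⊥ ∧ SMV ⊔ RV = ⊤ ∧
      ∃ e : SMV ≃ₗ[F] V ⧸ RV, ∀ a : SMV, e a = RV.mkQ (a : V) := by
  have hbot : SMV ⊓ RV = ⊥ := by
    apply hss (SMV ⊓ RV) inf_le_left
    · intro s hs t ht j hj
      obtain ⟨hjS, hjR⟩ := hj
      have hR := hRV.1 s t j hjR
      have hS1 := hSMV s hs j hjS t ht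
      have hS2 := hSMV j hjS s hs t ht
      have hS3 := hSMV s hs t ht j hjS
      exact ⟨⟨hS1.1, hR.1⟩, ⟨hS2.1, hR.2.1⟩, ⟨hS2.2, hR.2.2.1⟩,
        ⟨hS1.2, hR.2.2.2.1⟩, ⟨hS3.2, hR.2.2.2.2⟩⟩
    · obtain ⟨k, hk⟩ := hRV.2.1
      exact ⟨k, le_bot_iff.mp (hk ▸ bolChainIn_le_bolChain tri inf_le_right k)⟩
  have hcompl : IsCompl RV SMV := by
    constructor
    · rw [disjoint_iff, inf_comm]; exact hbot
    · rw [codisjoint_iff, sup_comm]; exact hsum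
  refine ⟨hbot, hsum, (Submodule.quotientEquivOfIsCompl RV SMV hcompl).symm, ?_⟩
  intro a
  exact Submodule.quotientEquivOfIsCompl_symm_apply RV SMV hcompl a
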